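/- Let Γ be a group and ρ : Γ → GL(r, ℂ) a representation such that (a) ρ is conjugate to a representation with values in GL(r, ℤ), and (b) the image of ρ is relatively compact (e.g., unitary). Then the image of ρ is finite. -/
import Mathlib


open scoped MatrixGroups

/-- Integers whose complex cast lies in a compact set form a finite set. -/
lemma int_cast_preimage_compact_finite {E : Set ℂ} (hE : IsCompact E) :
    {n : ℤ | (n : ℂ) ∈ E}.Finite := by
  obtain ⟨R, hR⟩ := hE.isBounded.subset_closedBall 0
  apply Set.Finite.subset (Set.finite_Icc (-⌈R⌉) ⌈R⌉)
  intro n hn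
  have h1 : ‖(n : ℂ)‖ ≤ R := by
    have := hR hn
    simpa [Metric.mem_closedBall, dist_zero_right] using this
  have h2 : (|n| : ℝ) ≤ R := by
    have : ‖(n : ℂ)‖ = |(n : ℝ)| := by
      rw [show ((n : ℂ)) = ((n : ℝ) : ℂ) by push_cast; ring, Complex.norm_real, Real.norm_eq_abs]
    rw [this] at h1
    exact_mod_cast h1
  have h3 : |n| ≤ ⌈R⌉ := by
    have := h2.trans (Int.le_ceil R)
    exact_mod_cast this
  simpa [Set.mem_Icc] using abs_le.mp h3

/-- A complex representation which is conjugate to an integral one and has relatively compact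
image has finite image. -/
theorem stmt7 {Γ : Type*} [Group Γ] (r : ℕ) (ρ : Γ →* GL (Fin r) ℂ)
    (hint : ∃ (P : GL (Fin r) ℂ) (ρℤ : Γ →* GL (Fin r) ℤ), ∀ g : Γ,
      (ρ g : Matrix (Fin r) (Fin r) ℂ)
        = (P : Matrix (Fin r) (Fin r) ℂ)
            * ((ρℤ g : Matrix (Fin r) (Fin r) ℤ).map (Int.cast : ℤ → ℂ))
            * ((P⁻¹ : GL (Fin r) ℂ) : Matrix (Fin r) (Fin r) ℂ))
    (hcpt : IsCompact (closure
      (Set.range fun g : Γ => (ρ g : Matrix (Fin r) (Fin r) ℂ)))) :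
    (Set.range ρ).Finite := by
  obtain ⟨P, ρℤ, h⟩ := hint
  -- the conjugated compact set containing all the integral matrices (cast to ℂ)
  set f : Matrix (Fin r) (Fin r) ℂ → Matrix (Fin r) (Fin r) ℂ :=
    fun x => ((P⁻¹ : GL (Fin r) ℂ) : Matrix (Fin r) (Fin r) ℂ) * x
        * (P : Matrix (Fin r) (Fin r) ℂ) with hf
  have hfc : Continuous f := by
    apply Continuous.matrix_mul
    · exact Continuous.matrix_mul continuous_const continuous_id
    · exact continuous_const
  set K := f '' closure (Set.range fun g : Γ => (ρ g : Matrix (Fin r) (Fin r) ℂ)) with hKdef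
  have hK : IsCompact K := hcpt.image hfc
  have hMK : ∀ g : Γ, ((ρℤ g : Matrix (Fin r) (Fin r) ℤ).map (Int.cast : ℤ → ℂ)) ∈ K := by
    intro g
    refine ⟨(ρ g : Matrix (Fin r) (Fin r) ℂ), subset_closure ⟨g, rfl⟩, ?_⟩
    rw [hf]
    dsimp only
    have h1 : ((P⁻¹ : GL (Fin r) ℂ) : Matrix (Fin r) (Fin r) ℂ)
        * (P : Matrix (Fin r) (Fin r) ℂ) = 1 := Units.inv_mul P
    rw [h g]
    simp only [← mul_assoc]
    rw [h1, one_mul, mul_assoc, h1, mul_one]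
  -- each entry of the integral matrices lies in a finite set
  have hsfin : ∀ i j : Fin r, {n : ℤ | (n : ℂ) ∈ (fun A => A i j) '' K}.Finite := by
    intro i j
    exact int_cast_preimage_compact_finite
      (hK.image (Continuous.comp (continuous_apply j) (continuous_apply i)))
  -- the set of integral matrix values is finite
  have hΦ : (Set.range fun g : Γ => (ρℤ g : Matrix (Fin r) (Fin r) ℤ)).Finite := by
    have : (Set.pi (Set.univ : Set (Fin r)) fun i =>
        Set.pi (Set.univ : Set (Fin r)) fun j =>
          {n : ℤ | (n : ℂ) ∈ (fun A => A i j) '' K} :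
        Set (Fin r → Fin r → ℤ)).Finite :=
      Set.Finite.pi fun i => Set.Finite.pi fun j => hsfin i j
    refine this.subset ?_
    rintro _ ⟨g, rfl⟩
    intro i _
    intro j _
    exact ⟨_, hMK g, rfl⟩
  -- transfer finiteness back to the range of ρ
  have hval : ((fun A : GL (Fin r) ℂ => (A : Matrix (Fin r) (Fin r) ℂ)) '' Set.range ρ).Finite := by
    have himg : ((fun A : Matrix (Fin r) (Fin r) ℤ =>
        (P : Matrix (Fin r) (Fin r) ℂ) * A.map (Int.cast : ℤ → ℂ)
          * ((P⁻¹ : GL (Fin r) ℂ) : Matrix (Fin r) (Fin r) ℂ)) ''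
        (Set.range fun g : Γ => (ρℤ g : Matrix (Fin r) (Fin r) ℤ))).Finite := hΦ.image _
    refine himg.subset ?_
    rintro _ ⟨_, ⟨g, rfl⟩, rfl⟩
    exact ⟨(ρℤ g : Matrix (Fin r) (Fin r) ℤ), ⟨g, rfl⟩, (h g).symm⟩
  exact Set.Finite.of_finite_image hval fun x _ y _ hxy => Units.ext hxy
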